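/- arXiv:1009.3469 — 3 statements merged into one kernel-verified Lean document; each statement's English description precedes it below -/
import Mathlib

section
/- Let p₁,…,pₙ be points in the plane and let L be the bottleneck (maximum edge length) of a minimum bottleneck spanning tree on p₁,…,pₙ. If ℓᵢ ∈ closed unit disk around pᵢ for each i, then the bottleneck of any minimum bottleneck spanning tree on ℓ₁,…,ℓₙ is at least L − 2. Consequently, L/2 ≤ OPT + 1, where OPT is the minimum over all choices of ℓᵢ of half the bottleneck of a minimum bottleneck spanning tree on the ℓᵢ. -/
open SimpleGraph

/-- The star graph on `Fin n` with hub `z`. -/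
def starG (n : ℕ) (z : Fin n) : SimpleGraph (Fin n) where
  Adj i j := i ≠ j ∧ (i = z ∨ j = z)
  symm := ⟨fun i j h => ⟨h.1.symm, h.2.symm⟩⟩
  loopless := ⟨fun i h => h.1 rfl⟩

lemma starG_pathEq {n : ℕ} (z : Fin n) : ∀ {v w : Fin n} (p : (starG n z).Walk v w),
    p.IsPath → ∀ (q : (starG n z).Walk v w), q.IsPath → p = q := by
  intro v w p
  induction p with
  | nil =>
    intro _ q hq
    exact ((SimpleGraph.Walk.isPath_iff_eq_nil (p := q)).mp hq).symm
  | @cons a b c h p ih =>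
    intro hp q hq
    cases q with
    | nil =>
      exact absurd ((SimpleGraph.Walk.isPath_iff_eq_nil (p := _)).mp hp) (by simp)
    | @cons _ b2 _ h2 q =>
      rw [SimpleGraph.Walk.cons_isPath_iff] at hp hq
      by_cases hvz : a = z
      · have hu : b ≠ z := fun e => h.1 (hvz.trans e.symm)
        have hu2 : b2 ≠ z := fun e => h2.1 (hvz.trans e.symm)
        have hpw : ∀ {x : Fin n} (_ : x ≠ z) (r : (starG n z).Walk x c),
            r.IsPath → z ∉ r.support → x = c ∧ r.length = 0 := by
          intro x hx r hr hzr
          cases r with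
          | nil => exact ⟨rfl, rfl⟩
          | @cons _ y _ h3 r2 =>
            have hy : y = z := h3.2.resolve_left hx
            exfalso
            apply hzr
            rw [SimpleGraph.Walk.support_cons]
            exact List.mem_cons_of_mem _ (hy ▸ r2.start_mem_support)
        have hzp : z ∉ p.support := by have h' := hp.2; rw [hvz] at h'; exact h'
        have hzq : z ∉ q.support := by have h' := hq.2; rw [hvz] at h'; exact h'
        obtain ⟨hpw1, hpl⟩ := hpw hu p hp.1 hzp
        obtain ⟨hqw1, hql⟩ := hpw hu2 q hq.1 hzq
        have he : b2 = b := hqw1.trans hpw1.symm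
        subst he
        subst hpw1
        have hp0 : p = SimpleGraph.Walk.nil := SimpleGraph.Walk.nil_iff_eq_nil.mp (SimpleGraph.Walk.length_eq_zero_iff.mp hpl)
        have hq0 : q = SimpleGraph.Walk.nil := SimpleGraph.Walk.nil_iff_eq_nil.mp (SimpleGraph.Walk.length_eq_zero_iff.mp hql)
        rw [hp0, hq0]
      · have hu : b = z := h.2.resolve_left hvz
        have hu2 : b2 = z := h2.2.resolve_left hvz
        have he : b2 = b := hu2.trans hu.symm
        subst he
        rw [ih hp.1 q hq.1]

lemma starG_isTree {n : ℕ} (hn : 1 ≤ n) : (starG n ⟨0, hn⟩).IsTree := by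
  set z : Fin n := ⟨0, hn⟩
  constructor
  · rw [SimpleGraph.connected_iff_exists_forall_reachable]
    refine ⟨z, fun w => ?_⟩
    by_cases hw : w = z
    · exact hw ▸ SimpleGraph.Reachable.refl w
    · exact (SimpleGraph.Adj.reachable (show (starG n z).Adj w z from ⟨hw, Or.inr rfl⟩)).symm
  · apply SimpleGraph.isAcyclic_of_path_unique
    intro v w p q
    exact Subtype.ext (starG_pathEq z p.1 p.2 q.1 q.2)

theorem exists_tree (n : ℕ) (hn : 1 ≤ n) : ∃ T : SimpleGraph (Fin n), T.IsTree :=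
  ⟨_, starG_isTree hn⟩

/-- The bottleneck (maximum edge length) of a spanning tree `T` on points `q`. -/
noncomputable def treeBottleneck {n : ℕ} (q : Fin n → EuclideanSpace ℝ (Fin 2))
    (T : SimpleGraph (Fin n)) : ℝ :=
  sSup {d : ℝ | ∃ i j, T.Adj i j ∧ d = dist (q i) (q j)}

/-- The minimum bottleneck spanning tree value of the point set `q`. -/
noncomputable def mbst {n : ℕ} (q : Fin n → EuclideanSpace ℝ (Fin 2)) : ℝ :=
  sInf {b : ℝ | ∃ T : SimpleGraph (Fin n), T.IsTree ∧ b = treeBottleneck q T}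

lemma edgeSet_bddAbove {n : ℕ} (q : Fin n → EuclideanSpace ℝ (Fin 2))
    (T : SimpleGraph (Fin n)) :
    BddAbove {d : ℝ | ∃ i j, T.Adj i j ∧ d = dist (q i) (q j)} := by
  apply BddAbove.mono (t := Set.range fun ij : Fin n × Fin n => dist (q ij.1) (q ij.2))
  · rintro d ⟨i, j, _, rfl⟩
    exact ⟨(i, j), rfl⟩
  · exact (Set.finite_range _).bddAbove

lemma treeBottleneck_nonneg {n : ℕ} (q : Fin n → EuclideanSpace ℝ (Fin 2))
    (T : SimpleGraph (Fin n)) : 0 ≤ treeBottleneck q T := by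
  apply Real.sSup_nonneg
  rintro d ⟨i, j, _, rfl⟩
  exact dist_nonneg

lemma treeBottleneck_compare {n : ℕ} (p ℓ : Fin n → EuclideanSpace ℝ (Fin 2))
    (hℓ : ∀ i, dist (ℓ i) (p i) ≤ 1) (T : SimpleGraph (Fin n)) :
    treeBottleneck p T ≤ treeBottleneck ℓ T + 2 := by
  by_cases hE : ∃ i j, T.Adj i j
  · apply csSup_le
    · obtain ⟨i, j, hij⟩ := hE
      exact ⟨_, i, j, hij, rfl⟩
    · rintro d ⟨i, j, hij, rfl⟩
      have h1 : dist (p i) (p j) ≤ dist (p i) (ℓ i) + dist (ℓ i) (ℓ j) + dist (ℓ j) (p j) :=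
        dist_triangle4 _ _ _ _
      have h2 : dist (ℓ i) (ℓ j) ≤ treeBottleneck ℓ T :=
        le_csSup (edgeSet_bddAbove ℓ T) ⟨i, j, hij, rfl⟩
      have h3 : dist (p i) (ℓ i) ≤ 1 := dist_comm (ℓ i) (p i) ▸ hℓ i
      have h4 : dist (ℓ j) (p j) ≤ 1 := hℓ j
      linarith
  · have h0 : {d : ℝ | ∃ i j, T.Adj i j ∧ d = dist (p i) (p j)} = ∅ := by
      ext d; simp only [Set.mem_setOf_eq, Set.mem_empty_iff_false, iff_false]
      rintro ⟨i, j, hij, _⟩; exact hE ⟨i, j, hij⟩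
    have := treeBottleneck_nonneg ℓ T
    rw [treeBottleneck, h0, Real.sSup_empty]
    linarith

lemma mbst_setNonempty {n : ℕ} (hn : 1 ≤ n) (q : Fin n → EuclideanSpace ℝ (Fin 2)) :
    {b : ℝ | ∃ T : SimpleGraph (Fin n), T.IsTree ∧ b = treeBottleneck q T}.Nonempty :=
  ⟨_, _, starG_isTree hn, rfl⟩

lemma mbst_setBddBelow {n : ℕ} (q : Fin n → EuclideanSpace ℝ (Fin 2)) :
    BddBelow {b : ℝ | ∃ T : SimpleGraph (Fin n), T.IsTree ∧ b = treeBottleneck q T} := by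
  refine ⟨0, ?_⟩
  rintro b ⟨T, _, rfl⟩
  exact treeBottleneck_nonneg q T

theorem stmt_4 (n : ℕ) (hn : 1 ≤ n) (p : Fin n → EuclideanSpace ℝ (Fin 2)) :
    (∀ ℓ : Fin n → EuclideanSpace ℝ (Fin 2), (∀ i, dist (ℓ i) (p i) ≤ 1) →
      mbst p - 2 ≤ mbst ℓ) ∧
    mbst p / 2 ≤
      sInf {α : ℝ | ∃ ℓ : Fin n → EuclideanSpace ℝ (Fin 2),
        (∀ i, dist (ℓ i) (p i) ≤ 1) ∧ α = mbst ℓ / 2} + 1 := by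
  have key : ∀ ℓ : Fin n → EuclideanSpace ℝ (Fin 2), (∀ i, dist (ℓ i) (p i) ≤ 1) →
      mbst p - 2 ≤ mbst ℓ := by
    intro ℓ hℓ
    show mbst p - 2 ≤
      sInf {b : ℝ | ∃ T : SimpleGraph (Fin n), T.IsTree ∧ b = treeBottleneck ℓ T}
    apply le_csInf (mbst_setNonempty hn ℓ)
    rintro b ⟨T, hT, rfl⟩
    have h1 : mbst p ≤ treeBottleneck p T := csInf_le (mbst_setBddBelow p) ⟨T, hT, rfl⟩
    have h2 := treeBottleneck_compare p ℓ hℓ T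
    linarith
  refine ⟨key, ?_⟩
  have hne : {α : ℝ | ∃ ℓ : Fin n → EuclideanSpace ℝ (Fin 2),
      (∀ i, dist (ℓ i) (p i) ≤ 1) ∧ α = mbst ℓ / 2}.Nonempty :=
    ⟨mbst p / 2, p, fun i => by simp, rfl⟩
  rw [← sub_le_iff_le_add]
  apply le_csInf hne
  rintro α ⟨ℓ, hℓ, rfl⟩
  have := key ℓ hℓ
  linarith
end

section
/- A minimum spanning tree of a finite weighted graph is also a minimum bottleneck spanning tree: the maximum edge weight of any MST equals the minimum over all spanning trees of their maximum edge weight. -/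
open SimpleGraph Set

private lemma reach_or_aux {V : Type*} {T : SimpleGraph V} {a b : V}
    {v z : V} (p : T.Walk v z)
    (hz : (T.deleteEdges {s(a,b)}).Reachable z a ∨ (T.deleteEdges {s(a,b)}).Reachable z b) :
    (T.deleteEdges {s(a,b)}).Reachable v a ∨ (T.deleteEdges {s(a,b)}).Reachable v b := by
  induction p with
  | nil => exact hz
  | @cons v u _ h q ih =>
    by_cases hvu : s(v, u) = s(a, b)
    · rw [Sym2.eq_iff] at hvu
      rcases hvu with ⟨rfl, rfl⟩ | ⟨rfl, rfl⟩
      · exact Or.inl (Reachable.refl _)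
      · exact Or.inr (Reachable.refl _)
    · have hadj : (T.deleteEdges {s(a,b)}).Adj v u := by
        rw [SimpleGraph.deleteEdges_adj]
        exact ⟨h, by simpa using hvu⟩
      rcases ih hz with h1 | h1
      · exact Or.inl (hadj.reachable.trans h1)
      · exact Or.inr (hadj.reachable.trans h1)

theorem stmt_12 {V : Type*} [Fintype V] (G : SimpleGraph V) (w : Sym2 V → ℝ)
    (T : SimpleGraph V) (hTG : T ≤ G) (hT : T.IsTree)
    (hmin : ∀ T' : SimpleGraph V, T' ≤ G → T'.IsTree →
      ∑ᶠ e ∈ T.edgeSet, w e ≤ ∑ᶠ e ∈ T'.edgeSet, w e) :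
    ∀ T' : SimpleGraph V, T' ≤ G → T'.IsTree →
      sSup (w '' T.edgeSet) ≤ sSup (w '' T'.edgeSet) := by
  intro T' hT'G hT'
  rcases Set.eq_empty_or_nonempty T.edgeSet with hTe | hTe
  · -- T has no edges, so V is a subsingleton and T' has no edges either
    have hbot : T = ⊥ := by rwa [SimpleGraph.edgeSet_eq_empty] at hTe
    have hsub : ∀ u v : V, u = v := by
      intro u v
      have := hT.isConnected.preconnected u v
      rcases this with ⟨p⟩
      cases p with
      | nil => rfl
      | cons h q => rw [hbot] at h; exact absurd h (by simp)
    have hT'e : T'.edgeSet = ∅ := by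
      ext e
      induction e using Sym2.ind with
      | _ u v =>
        simp only [SimpleGraph.mem_edgeSet, Set.mem_empty_iff_false, iff_false]
        intro h
        exact h.ne (hsub u v)
    rw [hTe, hT'e]
  · -- main case
    have hfinT : (w '' T.edgeSet).Nonempty := hTe.image w
    apply csSup_le hfinT
    rintro x ⟨e, he, rfl⟩
    by_contra hlt
    push_neg at hlt
    set M := sSup (w '' T'.edgeSet) with hM
    induction e using Sym2.ind with
    | _ a b =>
    have hab : T.Adj a b := he
    -- the cut
    set S : Set V := {v | (T.deleteEdges {s(a,b)}).Reachable a v} with hS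
    have haS : a ∈ S := Reachable.refl _
    have hbS : b ∉ S := by
      have hbridge := (SimpleGraph.isAcyclic_iff_forall_edge_isBridge.mp hT.IsAcyclic) he
      rw [SimpleGraph.isBridge_iff] at hbridge
      intro hmem
      exact hbridge hmem
    -- a walk in T' from a to b crosses the cut
    obtain ⟨p⟩ := hT'.isConnected.preconnected a b
    obtain ⟨d, _, hdS, hdS'⟩ := p.exists_boundary_dart S haS hbS
    set x := d.toProd.1 with hx
    set y := d.toProd.2 with hy
    have hxy : T'.Adj x y := d.adj
    have hfmem : s(x, y) ∈ T'.edgeSet := hxy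
    have hxney : x ≠ y := hxy.ne
    -- weight bound for the new edge
    have hwf : w s(x, y) ≤ M := by
      apply le_csSup ((Set.toFinite _).bddAbove)
      exact ⟨s(x,y), hfmem, rfl⟩
    have hfne : s(x, y) ≠ s(a, b) := fun h => absurd (h ▸ hwf) (not_le.mpr hlt)
    -- the new edge is not an edge of T - e (else y would be in S)
    have hfnotT : s(x, y) ∉ T.edgeSet \ {s(a, b)} := by
      rintro ⟨hfT, hfne'⟩
      apply hdS'
      have hadj : (T.deleteEdges {s(a,b)}).Adj x y := by
        rw [SimpleGraph.deleteEdges_adj]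
        exact ⟨hfT, by simpa using hfne'⟩
      exact hdS.trans hadj.reachable
    -- the exchanged tree
    set T'' : SimpleGraph V := T.deleteEdges {s(a,b)} ⊔ SimpleGraph.fromEdgeSet {s(x,y)} with hT''
    have hfadj : T''.Adj x y := by
      apply Or.inr
      rw [SimpleGraph.fromEdgeSet_adj]
      exact ⟨rfl, hxney⟩
    have hle : T.deleteEdges {s(a,b)} ≤ T'' := le_sup_left
    have hT''G : T'' ≤ G := by
      apply sup_le ((SimpleGraph.deleteEdges_le _).trans hTG)
      intro u v huv
      rw [SimpleGraph.fromEdgeSet_adj] at huv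
      have : s(u, v) ∈ T'.edgeSet := by rw [huv.1]; exact hfmem
      exact hT'G this
    -- reachability in T''
    have reach_or : ∀ v : V, (T.deleteEdges {s(a,b)}).Reachable v a ∨
        (T.deleteEdges {s(a,b)}).Reachable v b := by
      intro v
      obtain ⟨p⟩ := hT.isConnected.preconnected v a
      exact reach_or_aux p (Or.inl (Reachable.refl _))
    have hba : T''.Reachable b a := by
      have hyb : (T.deleteEdges {s(a,b)}).Reachable y b := by
        rcases reach_or y with h1 | h1
        · exact absurd h1.symm hdS'
        · exact h1
      have hxa : (T.deleteEdges {s(a,b)}).Reachable x a := hdS.symm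
      exact ((hyb.symm.mono hle).trans hfadj.symm.reachable).trans (hxa.mono hle)
    have hT''conn : T''.Connected := by
      have hne : Nonempty V := ⟨a⟩
      rw [SimpleGraph.connected_iff]
      refine ⟨fun u v => ?_, hne⟩
      have key : ∀ z : V, T''.Reachable z a := by
        intro z
        rcases reach_or z with h1 | h1
        · exact h1.mono hle
        · exact (h1.mono hle).trans hba
      exact (key u).trans (key v).symm
    -- edge set of T''
    have hedges : T''.edgeSet = (T.edgeSet \ {s(a,b)}) ∪ {s(x,y)} := by
      rw [hT'', SimpleGraph.edgeSet_sup, SimpleGraph.edgeSet_deleteEdges,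
        SimpleGraph.edgeSet_fromEdgeSet]
      congr 1
      ext e
      simp only [Set.mem_diff, Set.mem_singleton_iff, Set.mem_setOf_eq]
      constructor
      · exact fun h => h.1
      · rintro rfl
        exact ⟨rfl, by simp [Sym2.isDiag_iff_proj_eq, hxney]⟩
    -- acyclicity of T''
    have hT''acyc : T''.IsAcyclic := by
      intro v c hc
      by_cases hfc : s(x, y) ∈ c.edges
      · -- f is a bridge of T''
        have hbridge : T''.IsBridge s(x, y) := by
          rw [SimpleGraph.isBridge_iff]
          intro hreach
          have hTd : T'' \ SimpleGraph.fromEdgeSet {s(x,y)} ≤ T.deleteEdges {s(a,b)} := by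
            intro u v huv
            rcases huv.1 with h1 | h1
            · exact h1
            · exact absurd h1 huv.2
          have : (T.deleteEdges {s(a,b)}).Reachable x y := hreach.mono hTd
          exact hdS' (hdS.trans this)
        exact hbridge.notMem_edges_of_isCycle hc hfc
      · -- cycle avoids f, so it lives in T
        have hsub : ∀ e ∈ c.edges, e ∈ T.edgeSet := by
          intro e hec
          have := c.edges_subset_edgeSet hec
          rw [hedges] at this
          rcases this with h1 | h1
          · exact h1.1
          · rw [Set.mem_singleton_iff] at h1
            exact absurd (h1 ▸ hec) hfc
        exact hT.IsAcyclic (c.transfer T hsub) (hc.transfer hsub)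
    have hT''tree : T''.IsTree := ⟨hT''conn, hT''acyc⟩
    -- sum comparison
    have hsum := hmin T'' hT''G hT''tree
    have hTsplit : T.edgeSet = (T.edgeSet \ {s(a,b)}) ∪ {s(a,b)} := by
      rw [Set.diff_union_self]
      exact (Set.union_eq_self_of_subset_right (by simpa using he)).symm
    have hdisj1 : Disjoint (T.edgeSet \ {s(a,b)}) {s(a,b)} := Set.disjoint_sdiff_left
    have hdisj2 : Disjoint (T.edgeSet \ {s(a,b)}) {s(x,y)} := by
      rw [Set.disjoint_singleton_right]
      exact hfnotT
    have hfin1 : (T.edgeSet \ {s(a,b)}).Finite := Set.toFinite _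
    have hsumT : ∑ᶠ e ∈ T.edgeSet, w e
        = (∑ᶠ e ∈ T.edgeSet \ {s(a,b)}, w e) + w s(a,b) := by
      conv_lhs => rw [hTsplit]
      rw [finsum_mem_union hdisj1 hfin1 (Set.finite_singleton _), finsum_mem_singleton]
    have hsumT'' : ∑ᶠ e ∈ T''.edgeSet, w e
        = (∑ᶠ e ∈ T.edgeSet \ {s(a,b)}, w e) + w s(x,y) := by
      rw [hedges, finsum_mem_union hdisj2 hfin1 (Set.finite_singleton _), finsum_mem_singleton]
    rw [hsumT, hsumT''] at hsum
    have : w s(a,b) ≤ w s(x,y) := by linarith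
    linarith
end

section
/- Let p be a point in the relative interior of a segment S in ℝ², and let q₁, q₂ be points such that q₁ and q₂ lie in different open half-planes determined by the line through p perpendicular to S. Then for any point p' ∈ S with p' ≠ p, max(dist(p', q₁), dist(p', q₂)) > max(dist(p, q₁), dist(p, q₂)) holds whenever dist(p,q₁) = dist(p,q₂). -/
open RealInnerProductSpace

theorem stmt_17 (a b p q₁ q₂ : EuclideanSpace ℝ (Fin 2))
    (hp : p ∈ openSegment ℝ a b)
    (h₁ : @inner ℝ _ _ (q₁ - p) (b - a) < 0)
    (h₂ : (0 : ℝ) < @inner ℝ _ _ (q₂ - p) (b - a))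
    (heq : dist p q₁ = dist p q₂) :
    ∀ p' ∈ segment ℝ a b, p' ≠ p →
      max (dist p q₁) (dist p q₂) < max (dist p' q₁) (dist p' q₂) := by
  rw [openSegment_eq_image'] at hp
  obtain ⟨s, hs, rfl⟩ := hp
  intro p' hp' hne
  rw [segment_eq_image'] at hp'
  obtain ⟨s', hs', rfl⟩ := hp'
  set p := a + s • (b - a) with hpdef
  have ht : s' - s ≠ 0 := by
    intro h
    apply hne
    have : s' = s := by linarith
    rw [this]
  have key : ∀ q : EuclideanSpace ℝ (Fin 2),
      0 < (s' - s) * ⟪p - q, b - a⟫ → dist p q < dist (a + s' • (b - a)) q := by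
    intro q hq
    have h1 : a + s' • (b - a) - q = (p - q) + (s' - s) • (b - a) := by
      rw [hpdef]; module
    have h2 : dist (a + s' • (b - a)) q ^ 2 =
        dist p q ^ 2 + 2 * ((s' - s) * ⟪p - q, b - a⟫) + (s' - s) ^ 2 * ‖b - a‖ ^ 2 := by
      rw [dist_eq_norm, dist_eq_norm, h1, norm_add_sq_real, real_inner_smul_right,
        norm_smul, Real.norm_eq_abs, mul_pow, sq_abs]
    nlinarith [dist_nonneg (x := p) (y := q), dist_nonneg (x := a + s' • (b - a)) (y := q),
      sq_nonneg (s' - s), sq_nonneg ‖b - a‖]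
  have hq1 : (0 : ℝ) < ⟪p - q₁, b - a⟫ := by
    have : ⟪p - q₁, b - a⟫ = -⟪q₁ - p, b - a⟫ := by
      rw [← neg_sub q₁ p, inner_neg_left]
    rw [this]; linarith
  have hq2 : ⟪p - q₂, b - a⟫ < 0 := by
    have : ⟪p - q₂, b - a⟫ = -⟪q₂ - p, b - a⟫ := by
      rw [← neg_sub q₂ p, inner_neg_left]
    rw [this]; linarith
  rcases ht.lt_or_gt with htn | htp
  · have hd := key q₂ (by nlinarith)
    calc max (dist p q₁) (dist p q₂) = dist p q₂ := by rw [heq, max_self]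
      _ < dist (a + s' • (b - a)) q₂ := hd
      _ ≤ _ := le_max_right _ _
  · have hd := key q₁ (by nlinarith)
    calc max (dist p q₁) (dist p q₂) = dist p q₁ := by rw [heq, max_self]
      _ < dist (a + s' • (b - a)) q₁ := hd
      _ ≤ _ := le_max_left _ _
end
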